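/- arXiv:0909.2944 — 5 statements merged into one kernel-verified Lean document; each statement's English description precedes it below -/
import Mathlib

section
/- Let η ∈ (0,1/4). There exist positive constants δ_0, C̃_1, C̃_2, C_3 (depending only on η) such that for every δ with |δ| < δ_0, denoting by a(δ) the unique zero of f_δ := f + δ in (1/4, 3/4) and μ(δ) := f'(a(δ)), and letting Y be the solution of Y_τ = f(Y) + δ with Y(0,ξ) = ξ, the following holds: if ξ ∈ (a(δ), 1-η) and τ > 0 are such that Y(s,ξ) ∈ (a(δ), 1-η) for all s ∈ [0,τ], then C̃_1 e^{μ(δ)τ} ≤ ∂_ξ Y(τ,ξ) ≤ C̃_2 e^{μ(δ)τ} and |A(τ,ξ)| ≤ C_3 (e^{μ(δ)τ} - 1), where A(τ,ξ) := (f'(Y(τ,ξ)) - f'(ξ))/(f(ξ)+δ); the same two estimates hold if instead ξ ∈ (η, a(δ)) and Y(s,ξ) ∈ (η, a(δ)) for all s ∈ [0,τ]. -/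
noncomputable def f (u : ℝ) : ℝ := u * (1 - u) * (u - 1/2)

lemma f_hasDerivAt (u : ℝ) : HasDerivAt f (-3*u^2 + 3*u - 1/2) u := by
  have h : HasDerivAt (fun u : ℝ => u * (1 - u) * (u - 1/2))
      ((1 * (1 - u) + u * (0 - 1)) * (u - 1/2) + u * (1 - u) * (1 - 0)) u :=
    (((hasDerivAt_id u).mul ((hasDerivAt_const u 1).sub (hasDerivAt_id u))).mul
      ((hasDerivAt_id u).sub (hasDerivAt_const u (1/2:ℝ))))
  convert h using 1
  · rfl
  · ring

lemma f_deriv (u : ℝ) : deriv f u = -3*u^2 + 3*u - 1/2 := (f_hasDerivAt u).deriv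

lemma f_hasDerivAt' (u : ℝ) : HasDerivAt f (deriv f u) u := by
  rw [f_deriv]; exact f_hasDerivAt u

lemma f_incr {a y : ℝ} (h1 : 1/4 ≤ a) (h2 : a ≤ y) (h3 : y ≤ 3/4) :
    (y - a)/16 ≤ f y - f a := by
  simp only [f]
  nlinarith [mul_nonneg (sub_nonneg.2 h2) (mul_nonneg (sub_nonneg.2 h1) (sub_nonneg.2 h3)),
    mul_nonneg (sub_nonneg.2 h2) (mul_nonneg (by linarith : (0:ℝ) ≤ y - 1/4) (by linarith : (0:ℝ) ≤ 3/4 - y)),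
    mul_nonneg (sub_nonneg.2 h2) (mul_nonneg (by linarith : (0:ℝ) ≤ a - 1/4) (by linarith : (0:ℝ) ≤ 3/4 - a)),
    sq_nonneg (y - a), sq_nonneg (y + a - 1)]

lemma fp_bounds {u : ℝ} (h0 : 0 ≤ u) (h1 : u ≤ 1) :
    -1/2 ≤ deriv f u ∧ deriv f u ≤ 1/4 := by
  rw [f_deriv]
  constructor <;> nlinarith [sq_nonneg (u - 1/2), mul_nonneg h0 (sub_nonneg.2 h1)]

lemma fp_lip {x y : ℝ} (hx0 : 0 ≤ x) (hx1 : x ≤ 1) (hy0 : 0 ≤ y) (hy1 : y ≤ 1) :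
    |deriv f x - deriv f y| ≤ 3 * |x - y| := by
  rw [f_deriv, f_deriv]
  have h : -3*x^2 + 3*x - 1/2 - (-3*y^2 + 3*y - 1/2) = 3*(x-y)*(1-x-y) := by ring
  rw [h, abs_mul, abs_mul, abs_of_pos (by norm_num : (0:ℝ) < 3)]
  have h1 : |1 - x - y| ≤ 1 := by rw [abs_le]; constructor <;> linarith
  nlinarith [abs_nonneg (x-y)]

lemma f_cont : Continuous f := by
  unfold f; continuity

lemma fp_cont : Continuous (deriv f) := by
  have : deriv f = fun u => -3*u^2 + 3*u - 1/2 := funext f_deriv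
  rw [this]; continuity

-- derivative at 0 from one-sided limit
lemma deriv_at_zero_of_pos {w g : ℝ → ℝ} (hw : ContDiff ℝ (⊤ : ℕ∞) w) (hg : Continuous g)
    (h : ∀ s : ℝ, 0 < s → HasDerivAt w (g s) s) : HasDerivAt w (g 0) 0 := by
  have hd : Differentiable ℝ w := hw.differentiable (by simp)
  have hc : Continuous (deriv w) := hw.continuous_deriv (by simp)
  have h1 : Filter.Tendsto (deriv w) (nhdsWithin 0 (Set.Ioi 0)) (nhds (deriv w 0)) :=
    (hc.tendsto 0).mono_left nhdsWithin_le_nhds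
  have h2 : Filter.Tendsto g (nhdsWithin 0 (Set.Ioi 0)) (nhds (g 0)) :=
    (hg.tendsto 0).mono_left nhdsWithin_le_nhds
  have h3 : Filter.Tendsto (deriv w) (nhdsWithin 0 (Set.Ioi 0)) (nhds (g 0)) := by
    apply h2.congr'
    filter_upwards [self_mem_nhdsWithin] with s hs
    exact ((h s hs).deriv).symm
  have he : g 0 = deriv w 0 := tendsto_nhds_unique h3 h1
  have h4 := (hd 0).hasDerivAt
  rwa [← he] at h4

lemma core (δ a c d σ K₀ : ℝ) (hK₀ : 1 ≤ K₀)
    (hσ : σ = 1 ∨ σ = -1)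
    (hJ0 : (0:ℝ) ≤ c) (hJ1 : d ≤ 1) (hlen : d - c ≤ 1)
    (hμ : 1/16 ≤ deriv f a)
    (hsign : ∀ y ∈ Set.Ioo c d, 0 < σ * (f y + δ))
    (hK : ∀ y ∈ Set.Ioo c d, |deriv f y - deriv f a| ≤ K₀ * (σ * (f y + δ)))
    (Y : ℝ → ℝ → ℝ)
    (hYs : ContDiff ℝ (⊤ : ℕ∞) (fun p : ℝ × ℝ => Y p.1 p.2))
    (hODE : ∀ ξ : ℝ, ∀ τ : ℝ, 0 < τ → HasDerivAt (fun t => Y t ξ) (f (Y τ ξ) + δ) τ)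
    (hinit : ∀ ξ : ℝ, Y 0 ξ = ξ)
    (ξ τ : ℝ) (hτ : 0 < τ) (hξ : ξ ∈ Set.Ioo c d)
    (hstay : ∀ s ∈ Set.Icc (0:ℝ) τ, Y s ξ ∈ Set.Ioo c d) :
    Real.exp (-K₀) * Real.exp (deriv f a * τ) ≤ deriv (fun x => Y τ x) ξ ∧
    deriv (fun x => Y τ x) ξ ≤ Real.exp K₀ * Real.exp (deriv f a * τ) ∧
    |(deriv f (Y τ ξ) - deriv f ξ) / (f ξ + δ)| ≤
      (48 * Real.exp K₀) * (Real.exp (deriv f a * τ) - 1) := by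
  have hμ0 : (0:ℝ) < deriv f a := lt_of_lt_of_le (by norm_num) hμ
  have hK₀0 : (0:ℝ) ≤ K₀ := by linarith
  set z : ℝ → ℝ := fun s => Y s ξ with hzdef
  have hz_smooth : ContDiff ℝ (⊤ : ℕ∞) z := hYs.comp (contDiff_id.prodMk contDiff_const)
  have hz0 : z 0 = ξ := hinit ξ
  have hz' : ∀ s : ℝ, 0 ≤ s → HasDerivAt z (f (z s) + δ) s := by
    intro s hs
    rcases eq_or_lt_of_le hs with rfl | hs'
    · exact deriv_at_zero_of_pos hz_smooth ((f_cont.comp hz_smooth.continuous).add continuous_const)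
        (fun t ht => hODE ξ t ht)
    · exact hODE ξ s hs'
  have hfz_cont : Continuous (fun u => deriv f (z u)) := fp_cont.comp hz_smooth.continuous
  set I : ℝ → ℝ := fun s => ∫ u in (0:ℝ)..s, deriv f (z u) with hIdef
  have hI : ∀ s : ℝ, HasDerivAt I (deriv f (z s)) s :=
    fun s => (hfz_cont.integral_hasStrictDerivAt 0 s).hasDerivAt
  have hI0 : I 0 = 0 := intervalIntegral.integral_same
  have hIcont : Continuous I := by
    rw [continuous_iff_continuousAt]; exact fun x => (hI x).continuousAt
  -- Step A : f (z s) + δ = (f ξ + δ) * exp (I s) on [0, τ]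
  have stepA : ∀ s ∈ Set.Icc (0:ℝ) τ, f (z s) + δ = (f ξ + δ) * Real.exp (I s) := by
    have hφ' : ∀ s : ℝ, 0 ≤ s →
        HasDerivAt (fun t => (f (z t) + δ) * Real.exp (-(I t))) 0 s := by
      intro s hs
      have hA : HasDerivAt (fun t => f (z t) + δ) (deriv f (z s) * (f (z s) + δ)) s :=
        ((f_hasDerivAt' (z s)).comp s (hz' s hs)).add_const δ
      have hB : HasDerivAt (fun t => Real.exp (-(I t)))
          (Real.exp (-(I s)) * -(deriv f (z s))) s := ((hI s).neg).exp
      have := hA.mul hB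
      exact this.congr_deriv (by ring)
    have hconst := constant_of_has_deriv_right_zero
      (f := fun t => (f (z t) + δ) * Real.exp (-(I t)))
      (a := 0) (b := τ)
      (((f_cont.comp hz_smooth.continuous).add continuous_const).mul
        (Real.continuous_exp.comp hIcont.neg)).continuousOn
      (fun x hx => ((hφ' x hx.1).hasDerivWithinAt))
    intro s hs
    have h1 := hconst s hs
    simp only [hI0, hz0, neg_zero, Real.exp_zero, mul_one] at h1
    have h2 : Real.exp (-(I s)) * Real.exp (I s) = 1 := by
      rw [← Real.exp_add]; simp
    calc f (z s) + δ = (f (z s) + δ) * (Real.exp (-(I s)) * Real.exp (I s)) := by rw [h2, mul_one]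
    _ = ((f (z s) + δ) * Real.exp (-(I s))) * Real.exp (I s) := by ring
    _ = (f ξ + δ) * Real.exp (I s) := by rw [h1]
  -- derivative in ξ
  set g : ℝ × ℝ → ℝ := fun p => Y p.1 p.2 with hgdef
  have hgd : ∀ p : ℝ × ℝ, HasFDerivAt g (fderiv ℝ g p) p :=
    fun p => (hYs.differentiable (by simp) p).hasFDerivAt
  have hD_smooth : ContDiff ℝ (⊤ : ℕ∞) (fderiv ℝ g) := hYs.fderiv_right (by simp)
  set v : ℝ → ℝ := fun s => deriv (fun x => Y s x) ξ with hvdef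
  have hv_eq : ∀ s : ℝ, v s = fderiv ℝ g (s, ξ) ((0:ℝ), (1:ℝ)) := by
    intro s
    have hcurve : HasDerivAt (fun x : ℝ => ((s:ℝ), x)) ((0:ℝ), (1:ℝ)) ξ :=
      (hasDerivAt_const ξ s).prodMk (hasDerivAt_id ξ)
    exact ((hgd (s, ξ)).comp_hasDerivAt ξ hcurve).deriv
  have hv_fun : v = fun s => fderiv ℝ g (s, ξ) ((0:ℝ), (1:ℝ)) := funext hv_eq
  have hv_smooth : ContDiff ℝ (⊤ : ℕ∞) v := by
    rw [hv_fun]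
    exact ((hD_smooth.comp (contDiff_id.prodMk contDiff_const)).clm_apply contDiff_const)
  have hv0 : v 0 = 1 := by
    have : (fun x => Y 0 x) = id := funext hinit
    simp only [hvdef, this, deriv_id]
  have hv' : ∀ s : ℝ, 0 ≤ s → HasDerivAt v (deriv f (z s) * v s) s := by
    have hpos : ∀ s : ℝ, 0 < s → HasDerivAt v (deriv f (z s) * v s) s := by
      intro s hs
      set B := fderiv ℝ (fderiv ℝ g) (s, ξ) with hBdef
      have hB : HasFDerivAt (fderiv ℝ g) B (s, ξ) :=
        ((hD_smooth.differentiable (by simp)) (s, ξ)).hasFDerivAt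
      have hsymm : B (1, 0) (0, 1) = B (0, 1) (1, 0) :=
        second_derivative_symmetric hgd hB _ _
      -- time derivative of v
      have hcurve1 : HasDerivAt (fun t : ℝ => (t, ξ)) ((1:ℝ), (0:ℝ)) s :=
        (hasDerivAt_id s).prodMk (hasDerivAt_const s ξ)
      have hDt : HasDerivAt (fun t => fderiv ℝ g (t, ξ)) (B (1, 0)) s :=
        hB.comp_hasDerivAt s hcurve1
      have hC1 : HasDerivAt (fun t => fderiv ℝ g (t, ξ) ((0:ℝ), (1:ℝ)))
          (B (1, 0) ((0:ℝ), (1:ℝ))) s := by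
        have := hDt.clm_apply (hasDerivAt_const s ((0:ℝ), (1:ℝ)))
        simpa using this
      -- space derivative of time-derivative
      have hcurve2 : HasDerivAt (fun x : ℝ => ((s:ℝ), x)) ((0:ℝ), (1:ℝ)) ξ :=
        (hasDerivAt_const ξ s).prodMk (hasDerivAt_id ξ)
      have hDx : HasDerivAt (fun x => fderiv ℝ g (s, x)) (B (0, 1)) ξ :=
        hB.comp_hasDerivAt ξ hcurve2
      have hC2 : HasDerivAt (fun x => fderiv ℝ g (s, x) ((1:ℝ), (0:ℝ)))
          (B (0, 1) ((1:ℝ), (0:ℝ))) ξ := by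
        have := hDx.clm_apply (hasDerivAt_const ξ ((1:ℝ), (0:ℝ)))
        simpa using this
      have h3 : (fun x => fderiv ℝ g (s, x) ((1:ℝ), (0:ℝ))) = fun x => f (Y s x) + δ := by
        funext x
        have hc : HasDerivAt (fun t => Y t x) (fderiv ℝ g (s, x) ((1:ℝ), (0:ℝ))) s :=
          by have := (hgd (s, x)).comp_hasDerivAt s ((hasDerivAt_id s).prodMk (hasDerivAt_const s x)); exact this
        exact hc.unique (hODE x s hs)
      have hRHS : HasDerivAt (fun x => f (Y s x) + δ) (deriv f (z s) * v s) ξ := by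
        have hYx : HasDerivAt (fun x => Y s x) (v s) ξ := by
          rw [hv_eq s]
          exact (hgd (s, ξ)).comp_hasDerivAt ξ hcurve2
        exact ((f_hasDerivAt' (z s)).comp ξ hYx).add_const δ
      rw [h3] at hC2
      have hBval : B (0, 1) ((1:ℝ), (0:ℝ)) = deriv f (z s) * v s := hC2.unique hRHS
      have : HasDerivAt v (B (1, 0) ((0:ℝ), (1:ℝ))) s := by
        rw [hv_fun]; exact hC1
      rwa [hsymm, hBval] at this
    intro s hs
    rcases eq_or_lt_of_le hs with rfl | hs'
    · exact deriv_at_zero_of_pos hv_smooth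
        ((fp_cont.comp hz_smooth.continuous).mul hv_smooth.continuous) hpos
    · exact hpos s hs'
  -- Step B : v s = exp (I s) on [0, τ]
  have stepB : ∀ s ∈ Set.Icc (0:ℝ) τ, v s = Real.exp (I s) := by
    have hψ' : ∀ s : ℝ, 0 ≤ s →
        HasDerivAt (fun t => v t * Real.exp (-(I t))) 0 s := by
      intro s hs
      have hB : HasDerivAt (fun t => Real.exp (-(I t)))
          (Real.exp (-(I s)) * -(deriv f (z s))) s := ((hI s).neg).exp
      have := (hv' s hs).mul hB
      exact this.congr_deriv (by ring)
    have hconst := constant_of_has_deriv_right_zero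
      (f := fun t => v t * Real.exp (-(I t)))
      (a := 0) (b := τ)
      (hv_smooth.continuous.mul (Real.continuous_exp.comp hIcont.neg)).continuousOn
      (fun x hx => ((hψ' x hx.1).hasDerivWithinAt))
    intro s hs
    have h1 := hconst s hs
    simp only [hI0, hv0, neg_zero, Real.exp_zero, mul_one, one_mul] at h1
    have h2 : Real.exp (-(I s)) * Real.exp (I s) = 1 := by
      rw [← Real.exp_add]; simp
    calc v s = (v s * Real.exp (-(I s))) * Real.exp (I s) := by
          rw [mul_assoc, h2, mul_one]
    _ = Real.exp (I s) := by rw [h1, one_mul]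
  -- Step C : |I s - μ s| ≤ K₀ on [0, τ]
  have hzmem : ∀ s ∈ Set.Icc (0:ℝ) τ, z s ∈ Set.Ioo c d := hstay
  have hσΔ : ∀ s ∈ Set.Icc (0:ℝ) τ, σ * (z s - ξ) ≤ 1 ∧ -1 ≤ σ * (z s - ξ) := by
    intro s hs
    have h1 := hzmem s hs
    rcases hσ with rfl | rfl
    · constructor <;> [nlinarith [h1.1, h1.2, hξ.1, hξ.2]; nlinarith [h1.1, h1.2, hξ.1, hξ.2]]
    · constructor <;> [nlinarith [h1.1, h1.2, hξ.1, hξ.2]; nlinarith [h1.1, h1.2, hξ.1, hξ.2]]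
  have stepC : ∀ s ∈ Set.Icc (0:ℝ) τ, |I s - deriv f a * s| ≤ K₀ := by
    intro s hs
    obtain ⟨hs0, hsτ⟩ := hs
    have hsubmem : ∀ u ∈ Set.Icc (0:ℝ) s, z u ∈ Set.Ioo c d :=
      fun u hu => hzmem u ⟨hu.1, hu.2.trans hsτ⟩
    have hint1 : IntervalIntegrable (fun u => deriv f (z u) - deriv f a) MeasureTheory.volume 0 s :=
      (hfz_cont.sub continuous_const).intervalIntegrable 0 s
    have hfδcont : Continuous (fun u => K₀ * (σ * (f (z u) + δ))) := by
      exact continuous_const.mul (continuous_const.mul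
        ((f_cont.comp hz_smooth.continuous).add continuous_const))
    have hint2 : IntervalIntegrable (fun u => K₀ * (σ * (f (z u) + δ))) MeasureTheory.volume 0 s :=
      hfδcont.intervalIntegrable 0 s
    have hint3 : IntervalIntegrable (fun u => -(K₀ * (σ * (f (z u) + δ)))) MeasureTheory.volume 0 s :=
      hint2.neg
    have hFTC : (∫ u in (0:ℝ)..s, K₀ * (σ * (f (z u) + δ))) = K₀ * (σ * (z s - ξ)) := by
      have hd : ∀ u ∈ Set.uIcc (0:ℝ) s, HasDerivAt (fun t => K₀ * (σ * z t))
          (K₀ * (σ * (f (z u) + δ))) u := by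
        intro u hu
        rw [Set.uIcc_of_le hs0] at hu
        exact ((hz' u hu.1).const_mul σ).const_mul K₀
      rw [intervalIntegral.integral_eq_sub_of_hasDerivAt hd hint2, hz0]
      ring
    have hIsub : I s - deriv f a * s = ∫ u in (0:ℝ)..s, (deriv f (z u) - deriv f a) := by
      rw [intervalIntegral.integral_sub (hfz_cont.intervalIntegrable 0 s)
        ((continuous_const).intervalIntegrable 0 s), intervalIntegral.integral_const]
      simp [smul_eq_mul, mul_comm, hIdef]
    have hup : I s - deriv f a * s ≤ K₀ := by
      rw [hIsub]
      calc (∫ u in (0:ℝ)..s, (deriv f (z u) - deriv f a))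
          ≤ ∫ u in (0:ℝ)..s, K₀ * (σ * (f (z u) + δ)) := by
            apply intervalIntegral.integral_mono_on hs0 hint1 hint2
            intro u hu
            have := hK (z u) (hsubmem u hu)
            have h2 := abs_le.1 this
            linarith [h2.2, le_abs_self (deriv f (z u) - deriv f a)]
      _ = K₀ * (σ * (z s - ξ)) := hFTC
      _ ≤ K₀ := by
            have := (hσΔ s ⟨hs0, hsτ⟩).1
            nlinarith
    have hlo : -K₀ ≤ I s - deriv f a * s := by
      rw [hIsub]
      have h4 : (∫ u in (0:ℝ)..s, -(K₀ * (σ * (f (z u) + δ))))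
          ≤ ∫ u in (0:ℝ)..s, (deriv f (z u) - deriv f a) := by
        apply intervalIntegral.integral_mono_on hs0 hint3 hint1
        intro u hu
        have h5 := abs_le.1 (hK (z u) (hsubmem u hu))
        linarith [neg_abs_le (deriv f (z u) - deriv f a), h5.1]
      have h6 : (∫ u in (0:ℝ)..s, -(K₀ * (σ * (f (z u) + δ)))) = -(K₀ * (σ * (z s - ξ))) := by
        rw [intervalIntegral.integral_neg, hFTC]
      rw [h6] at h4
      have h7 := (hσΔ s ⟨hs0, hsτ⟩).1
      nlinarith
    exact abs_le.2 ⟨hlo, hup⟩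
  -- the two derivative bounds
  have hτmem : τ ∈ Set.Icc (0:ℝ) τ := ⟨le_of_lt hτ, le_refl τ⟩
  have hvτ : deriv (fun x => Y τ x) ξ = Real.exp (I τ) := stepB τ hτmem
  have hIτ := abs_le.1 (stepC τ hτmem)
  refine ⟨?_, ?_, ?_⟩
  · rw [hvτ, ← Real.exp_add]
    exact Real.exp_le_exp.2 (by linarith [hIτ.1])
  · rw [hvτ, ← Real.exp_add]
    exact Real.exp_le_exp.2 (by linarith [hIτ.2])
  -- Step D
  · have hfξ : 0 < σ * (f ξ + δ) := hsign ξ hξ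
    have habsfξ : |f ξ + δ| = σ * (f ξ + δ) := by
      rcases hσ with rfl | rfl
      · rw [one_mul] at *; exact abs_of_pos hfξ
      · have : f ξ + δ < 0 := by nlinarith
        rw [abs_of_neg this]; ring
    have hfξne : f ξ + δ ≠ 0 := by
      intro h; rw [h, mul_zero] at hfξ; exact lt_irrefl 0 hfξ
    -- |z τ - ξ| bound
    have hWint : z τ - ξ = ∫ s in (0:ℝ)..τ, (f (z s) + δ) := by
      have hd : ∀ u ∈ Set.uIcc (0:ℝ) τ, HasDerivAt z (f (z u) + δ) u := by
        intro u hu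
        rw [Set.uIcc_of_le (le_of_lt hτ)] at hu
        exact hz' u hu.1
      rw [intervalIntegral.integral_eq_sub_of_hasDerivAt hd
        (((f_cont.comp hz_smooth.continuous).add continuous_const).intervalIntegrable 0 τ), hz0]
    have hptbound : ∀ s ∈ Set.Icc (0:ℝ) τ,
        |f (z s) + δ| ≤ (σ * (f ξ + δ)) * Real.exp K₀ * Real.exp (deriv f a * s) := by
      intro s hs
      have h1 := stepA s hs
      have h2 : |f (z s) + δ| = σ * (f (z s) + δ) := by
        have hp := hsign (z s) (hzmem s hs)
        rcases hσ with rfl | rfl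
        · rw [one_mul] at *; exact abs_of_pos hp
        · have : f (z s) + δ < 0 := by nlinarith
          rw [abs_of_neg this]; ring
      rw [h2, h1]
      have h3 : I s ≤ deriv f a * s + K₀ := by
        have := (abs_le.1 (stepC s hs)).2; linarith
      calc σ * ((f ξ + δ) * Real.exp (I s)) = (σ * (f ξ + δ)) * Real.exp (I s) := by ring
      _ ≤ (σ * (f ξ + δ)) * Real.exp (deriv f a * s + K₀) := by
            apply mul_le_mul_of_nonneg_left (Real.exp_le_exp.2 h3) (le_of_lt hfξ)
      _ = (σ * (f ξ + δ)) * Real.exp K₀ * Real.exp (deriv f a * s) := by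
            rw [Real.exp_add]; ring
    have hexpint : (∫ s in (0:ℝ)..τ, (σ * (f ξ + δ)) * Real.exp K₀ * Real.exp (deriv f a * s))
        = (σ * (f ξ + δ)) * Real.exp K₀ * ((Real.exp (deriv f a * τ) - 1) / deriv f a) := by
      have hd : ∀ u ∈ Set.uIcc (0:ℝ) τ,
          HasDerivAt (fun s => (σ * (f ξ + δ)) * Real.exp K₀ * (Real.exp (deriv f a * s) / deriv f a))
            ((σ * (f ξ + δ)) * Real.exp K₀ * Real.exp (deriv f a * u)) u := by
        intro u hu
        have h1 : HasDerivAt (fun s : ℝ => deriv f a * s) (deriv f a) u := by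
          simpa using (hasDerivAt_id u).const_mul (deriv f a)
        have h2 := h1.exp
        have h3 := (h2.div_const (deriv f a)).const_mul ((σ * (f ξ + δ)) * Real.exp K₀)
        exact h3.congr_deriv (by field_simp)
      rw [intervalIntegral.integral_eq_sub_of_hasDerivAt hd
        ((continuous_const.mul ((continuous_const.mul continuous_id).rexp)).intervalIntegrable 0 τ)]
      simp only [mul_zero, Real.exp_zero]
      field_simp
    have hWbound : |z τ - ξ| ≤ (σ * (f ξ + δ)) * Real.exp K₀ * ((Real.exp (deriv f a * τ) - 1) / deriv f a) := by
      rw [hWint]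
      calc |∫ s in (0:ℝ)..τ, (f (z s) + δ)|
          ≤ ∫ s in (0:ℝ)..τ, |f (z s) + δ| :=
            intervalIntegral.abs_integral_le_integral_abs (le_of_lt hτ)
      _ ≤ ∫ s in (0:ℝ)..τ, (σ * (f ξ + δ)) * Real.exp K₀ * Real.exp (deriv f a * s) := by
            apply intervalIntegral.integral_mono_on (le_of_lt hτ)
              (((f_cont.comp hz_smooth.continuous).add continuous_const).abs.intervalIntegrable 0 τ)
              ((continuous_const.mul ((continuous_const.mul continuous_id).rexp)).intervalIntegrable 0 τ)
            exact hptbound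
      _ = _ := hexpint
    have hzτ01 : z τ ∈ Set.Icc (0:ℝ) 1 := by
      have := hzmem τ hτmem
      exact ⟨by linarith [this.1], by linarith [this.2]⟩
    have hξ01 : ξ ∈ Set.Icc (0:ℝ) 1 := ⟨by linarith [hξ.1], by linarith [hξ.2]⟩
    have hlip : |deriv f (Y τ ξ) - deriv f ξ| ≤ 3 * |z τ - ξ| :=
      fp_lip hzτ01.1 hzτ01.2 hξ01.1 hξ01.2
    have hexp1 : (0:ℝ) ≤ Real.exp (deriv f a * τ) - 1 := by
      have : (0:ℝ) ≤ deriv f a * τ := le_of_lt (mul_pos hμ0 hτ)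
      have := Real.one_le_exp this
      linarith
    have hinvμ : (Real.exp (deriv f a * τ) - 1) / deriv f a ≤ 16 * (Real.exp (deriv f a * τ) - 1) := by
      rw [div_le_iff₀ hμ0]
      nlinarith
    rw [abs_div, habsfξ, div_le_iff₀ hfξ]
    calc |deriv f (Y τ ξ) - deriv f ξ| ≤ 3 * |z τ - ξ| := hlip
    _ ≤ 3 * ((σ * (f ξ + δ)) * Real.exp K₀ * ((Real.exp (deriv f a * τ) - 1) / deriv f a)) := by
          linarith
    _ ≤ 3 * ((σ * (f ξ + δ)) * Real.exp K₀ * (16 * (Real.exp (deriv f a * τ) - 1))) := by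
          apply mul_le_mul_of_nonneg_left _ (by norm_num : (0:ℝ) ≤ 3)
          apply mul_le_mul_of_nonneg_left hinvμ
          positivity
    _ = 48 * Real.exp K₀ * (Real.exp (deriv f a * τ) - 1) * (σ * (f ξ + δ)) := by ring


lemma prod_le_f {p q r y : ℝ} (hp : 0 ≤ p) (hq : 0 ≤ q) (hr : 0 ≤ r)
    (h1 : p ≤ y) (h2 : q ≤ 1 - y) (h3 : r ≤ y - 1/2) : p * q * r ≤ f y := by
  have hy0 : 0 ≤ y := le_trans hp h1
  have h4 : p * q ≤ y * (1 - y) := mul_le_mul h1 h2 hq hy0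
  have h5 : 0 ≤ y * (1 - y) := mul_nonneg hy0 (le_trans hq h2)
  have h6 : p * q * r ≤ (y * (1 - y)) * (y - 1/2) :=
    mul_le_mul h4 h3 hr h5
  simpa [f] using h6

lemma prod_le_negf {p q r y : ℝ} (hp : 0 ≤ p) (hq : 0 ≤ q) (hr : 0 ≤ r)
    (h1 : p ≤ y) (h2 : q ≤ 1 - y) (h3 : r ≤ 1/2 - y) : p * q * r ≤ -f y := by
  have hy0 : 0 ≤ y := le_trans hp h1
  have h4 : p * q ≤ y * (1 - y) := mul_le_mul h1 h2 hq hy0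
  have h5 : 0 ≤ y * (1 - y) := mul_nonneg hy0 (le_trans hq h2)
  have h6 : p * q * r ≤ (y * (1 - y)) * (1/2 - y) :=
    mul_le_mul h4 h3 hr h5
  have : -f y = y * (1 - y) * (1/2 - y) := by simp [f]; ring
  linarith [h6, this.ge]

lemma region1 (η a δ : ℝ) (hη0 : 0 < η) (hη4 : η < 1/4) (ha1 : 1/4 < a) (ha2 : a < 3/4)
    (hδ : |δ| < 3*η/32) (hfa : f a + δ = 0) (y : ℝ) (hy : y ∈ Set.Ioo a (1-η)) :
    0 < 1 * (f y + δ) ∧ |deriv f y - deriv f a| ≤ (48 + 11/η) * (1 * (f y + δ)) := by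
  obtain ⟨hy1, hy2⟩ := hy
  have habs := abs_lt.1 hδ
  have hδa : δ = -f a := by linarith
  have hy0 : (0:ℝ) ≤ y := by linarith
  have hy01 : y ≤ 1 := by linarith
  have ha0 : (0:ℝ) ≤ a := by linarith
  have ha01 : a ≤ 1 := by linarith
  have hηpos : (0:ℝ) < 11/η := by positivity
  rcases le_or_gt y (3/4) with h34 | h34
  · have hincr := f_incr (le_of_lt ha1) (le_of_lt hy1) h34
    have hpos : 0 < f y + δ := by rw [hδa]; linarith
    refine ⟨by linarith, ?_⟩
    have hl := fp_lip hy0 hy01 ha0 ha01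
    rw [abs_of_pos (by linarith : (0:ℝ) < y - a)] at hl
    have h48 : 3 * (y - a) ≤ 48 * (f y + δ) := by rw [hδa]; linarith
    nlinarith
  · have hfy : 3/4 * η * (1/4) ≤ f y :=
      prod_le_f (by norm_num) (le_of_lt hη0) (by norm_num)
        (le_of_lt h34) (by linarith) (by linarith)
    have hpos : 3*η/32 ≤ f y + δ := by linarith
    refine ⟨by linarith, ?_⟩
    have hb1 := fp_bounds hy0 hy01
    have hb2 := fp_bounds ha0 ha01
    have habs2 : |deriv f y - deriv f a| ≤ 1 := abs_le.2 ⟨by linarith, by linarith⟩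
    have hkey : (1:ℝ) ≤ (11/η) * (3*η/32) := by
      rw [div_mul_eq_mul_div, mul_comm]
      rw [show 3*η/32 * 11 = (33/32) * η by ring]
      rw [mul_div_assoc, div_self (ne_of_gt hη0)]
      norm_num
    nlinarith [mul_le_mul_of_nonneg_left hpos (le_of_lt hηpos)]

lemma region2 (η a δ : ℝ) (hη0 : 0 < η) (hη4 : η < 1/4) (ha1 : 1/4 < a) (ha2 : a < 3/4)
    (hδ : |δ| < 3*η/32) (hfa : f a + δ = 0) (y : ℝ) (hy : y ∈ Set.Ioo η a) :
    0 < -1 * (f y + δ) ∧ |deriv f y - deriv f a| ≤ (48 + 11/η) * (-1 * (f y + δ)) := by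
  obtain ⟨hy1, hy2⟩ := hy
  have habs := abs_lt.1 hδ
  have hδa : δ = -f a := by linarith
  have hy0 : (0:ℝ) ≤ y := by linarith
  have hy01 : y ≤ 1 := by linarith
  have ha0 : (0:ℝ) ≤ a := by linarith
  have ha01 : a ≤ 1 := by linarith
  have hηpos : (0:ℝ) < 11/η := by positivity
  rcases le_or_gt (1/4) y with h14 | h14
  · have hincr := f_incr h14 (le_of_lt hy2) (le_of_lt ha2)
    have hpos : 0 < f a - f y := by linarith
    refine ⟨by rw [hδa]; linarith, ?_⟩
    have hl := fp_lip hy0 hy01 ha0 ha01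
    rw [abs_of_neg (by linarith : y - a < 0)] at hl
    have h48 : 3 * (a - y) ≤ 48 * (-1 * (f y + δ)) := by rw [hδa]; linarith
    nlinarith
  · have hfy : η * (3/4) * (1/4) ≤ -f y :=
      prod_le_negf (le_of_lt hη0) (by norm_num) (by norm_num)
        (le_of_lt hy1) (by linarith) (by linarith)
    have hpos : 3*η/32 ≤ -1 * (f y + δ) := by nlinarith
    refine ⟨by linarith, ?_⟩
    have hb1 := fp_bounds hy0 hy01
    have hb2 := fp_bounds ha0 ha01
    have habs2 : |deriv f y - deriv f a| ≤ 1 := abs_le.2 ⟨by linarith, by linarith⟩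
    have hkey : (1:ℝ) ≤ (11/η) * (3*η/32) := by
      rw [div_mul_eq_mul_div, mul_comm]
      rw [show 3*η/32 * 11 = (33/32) * η by ring]
      rw [mul_div_assoc, div_self (ne_of_gt hη0)]
      norm_num
    nlinarith [mul_le_mul_of_nonneg_left hpos (le_of_lt hηpos)]

theorem est_derY_A_middle (η : ℝ) (hη : η ∈ Set.Ioo (0:ℝ) (1/4)) :
    ∃ δ0 > (0:ℝ), ∃ C1 > (0:ℝ), ∃ C2 > (0:ℝ), ∃ C3 > (0:ℝ),
      ∀ δ : ℝ, |δ| < δ0 →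
      ∀ a : ℝ, a ∈ Set.Ioo (1/4 : ℝ) (3/4) → f a + δ = 0 →
      ∀ Y : ℝ → ℝ → ℝ,
        ContDiff ℝ (⊤ : ℕ∞) (fun p : ℝ × ℝ => Y p.1 p.2) →
        (∀ ξ : ℝ, ∀ τ : ℝ, 0 < τ → HasDerivAt (fun t => Y t ξ) (f (Y τ ξ) + δ) τ) →
        (∀ ξ : ℝ, Y 0 ξ = ξ) →
        ∀ ξ τ : ℝ, 0 < τ →
          (ξ ∈ Set.Ioo a (1 - η) → (∀ s ∈ Set.Icc (0:ℝ) τ, Y s ξ ∈ Set.Ioo a (1 - η)) →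
            C1 * Real.exp (deriv f a * τ) ≤ deriv (fun x => Y τ x) ξ ∧
            deriv (fun x => Y τ x) ξ ≤ C2 * Real.exp (deriv f a * τ) ∧
            |(deriv f (Y τ ξ) - deriv f ξ) / (f ξ + δ)| ≤
              C3 * (Real.exp (deriv f a * τ) - 1)) ∧
          (ξ ∈ Set.Ioo η a → (∀ s ∈ Set.Icc (0:ℝ) τ, Y s ξ ∈ Set.Ioo η a) →
            C1 * Real.exp (deriv f a * τ) ≤ deriv (fun x => Y τ x) ξ ∧
            deriv (fun x => Y τ x) ξ ≤ C2 * Real.exp (deriv f a * τ) ∧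
            |(deriv f (Y τ ξ) - deriv f ξ) / (f ξ + δ)| ≤
              C3 * (Real.exp (deriv f a * τ) - 1)) := by
  obtain ⟨hη0, hη4⟩ := hη
  have hηpos : (0:ℝ) < 11/η := by positivity
  refine ⟨3*η/32, by linarith, Real.exp (-(48 + 11/η)), Real.exp_pos _,
    Real.exp (48 + 11/η), Real.exp_pos _, 48 * Real.exp (48 + 11/η), by positivity, ?_⟩
  intro δ hδ a ha hfa Y hYs hODE hinit ξ τ hτ
  obtain ⟨ha1, ha2⟩ := ha
  have hK₀ : (1:ℝ) ≤ 48 + 11/η := by linarith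
  have hμ : 1/16 ≤ deriv f a := by
    rw [f_deriv]; nlinarith [mul_nonneg (by linarith : (0:ℝ) ≤ a - 1/4) (by linarith : (0:ℝ) ≤ 3/4 - a)]
  constructor
  · intro hξ hstay
    exact core δ a a (1-η) 1 (48 + 11/η) hK₀ (Or.inl rfl) (by linarith) (by linarith)
      (by linarith) hμ (fun y hy => (region1 η a δ hη0 hη4 ha1 ha2 hδ hfa y hy).1)
      (fun y hy => (region1 η a δ hη0 hη4 ha1 ha2 hδ hfa y hy).2)
      Y hYs hODE hinit ξ τ hτ hξ hstay
  · intro hξ hstay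
    exact core δ a η a (-1) (48 + 11/η) hK₀ (Or.inr rfl) (by linarith) (by linarith)
      (by linarith) hμ (fun y hy => (region2 η a δ hη0 hη4 ha1 ha2 hδ hfa y hy).1)
      (fun y hy => (region2 η a δ hη0 hη4 ha1 ha2 hδ hfa y hy).2)
      Y hYs hODE hinit ξ τ hτ hξ hstay
end

section
/- Let η ∈ (0,1/4), let C_0 > 1, let g(u) = α u(1-u) with α > 0, set G := sup_{u ∈ [-2C_0, 2C_0]} |g(u)| and μ := 1/4. There exist positive constants ε_0 and C_7 (depending on η) such that for all ε ∈ (0, ε_0), both for δ = εG and for δ = -εG, the solution Y of Y_τ = f(Y) + δ with Y(0,ξ) = ξ satisfies: (i) for all ξ ∈ (-2C_0, 2C_0), -η ≤ Y(μ^{-1}|ln ε|, ξ) ≤ 1+η; (ii) if ξ ∈ (-2C_0, 2C_0) and ξ ≥ 1/2 + C_7 ε, then Y(μ^{-1}|ln ε|, ξ) ≥ 1-η; (iii) if ξ ∈ (-2C_0, 2C_0) and ξ ≤ 1/2 - C_7 ε, then Y(μ^{-1}|ln ε|, ξ) ≤ η. -/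
set_option maxHeartbeats 2000000

lemma expDeriv (c t : ℝ) : HasDerivAt (fun s : ℝ => Real.exp (c*s)) (c * Real.exp (c*t)) t := by
  simpa [mul_comm, Function.comp_def] using (Real.hasDerivAt_exp (c*t)).comp t ((hasDerivAt_id t).const_mul c)

lemma ode_ext {y : ℝ → ℝ} {δ : ℝ} (hsm : ContDiff ℝ (⊤ : ℕ∞) y)
    (hode : ∀ τ : ℝ, 0 < τ → HasDerivAt y (f (y τ) + δ) τ) :
    ∀ τ : ℝ, 0 ≤ τ → HasDerivAt y (f (y τ) + δ) τ := by
  intro τ hτ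
  rcases eq_or_lt_of_le hτ with h0 | hpos
  · have hdiff := (hsm.differentiable (by simp)).differentiableAt (x := τ)
    have hd : HasDerivAt y (deriv y τ) τ := hdiff.hasDerivAt
    suffices hEq : deriv y τ = f (y τ) + δ by rw [← hEq]; exact hd
    have hc : Continuous (deriv y) := hsm.continuous_deriv (by simp)
    have h1 : Filter.Tendsto (deriv y) (nhdsWithin τ (Set.Ioi τ)) (nhds (deriv y τ)) :=
      (hc.tendsto τ).mono_left nhdsWithin_le_nhds
    have h2 : Filter.Tendsto (fun t => f (y t) + δ) (nhdsWithin τ (Set.Ioi τ))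
        (nhds (f (y τ) + δ)) :=
      (((f_cont.comp hsm.continuous).add continuous_const).tendsto τ).mono_left nhdsWithin_le_nhds
    have heq : ∀ᶠ t in nhdsWithin τ (Set.Ioi τ), deriv y t = f (y t) + δ := by
      filter_upwards [self_mem_nhdsWithin] with t ht
      exact (hode t (by simpa [← h0] using ht)).deriv
    exact tendsto_nhds_unique (h1.congr' heq) h2
  · exact hode τ hpos

lemma L1 {y : ℝ → ℝ} {δ η M L : ℝ} (hy : ∀ τ, 0 ≤ τ → HasDerivAt y (f (y τ) + δ) τ)
    (hη : 0 < η) (hM : 1 + η/2 < M) (hy0 : y 0 ≤ M) (hδ : δ < η/4) (hL : 0 ≤ L) :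
    y (4*L) ≤ 1 + η/2 + (M - (1+η/2)) * Real.exp (-(1/2)*(4*L)) := by
  set c1 : ℝ := M - (1+η/2) with hc1
  have hc1pos : 0 < c1 := by simp [hc1]; linarith
  have key : ∀ x ∈ Set.Icc (0:ℝ) (4*L), y x ≤ 1 + η/2 + c1 * Real.exp (-(1/2)*x) := by
    apply image_le_of_deriv_right_lt_deriv_boundary
      (f := y) (f' := fun t => f (y t) + δ)
      (B := fun t => 1 + η/2 + c1 * Real.exp (-(1/2)*t))
      (B' := fun t => -(1/2) * (c1 * Real.exp (-(1/2)*t)))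
    · exact fun t ht => ((hy t ht.1).continuousAt).continuousWithinAt
    · exact fun x hx => (hy x hx.1).hasDerivWithinAt
    · have : Real.exp (-(1/2)*(0:ℝ)) = 1 := by norm_num
      rw [this, hc1]; linarith
    · intro x
      have := ((expDeriv (-(1/2)) x).const_mul c1).const_add (1 + η/2)
      refine this.congr_deriv ?_
      ring
    · intro x hx hcontact
      rw [hcontact]
      set s : ℝ := c1 * Real.exp (-(1/2)*x) with hs
      have hspos : 0 < s := mul_pos hc1pos (Real.exp_pos _)
      show f (1 + η/2 + s) + δ < -(1/2) * s
      unfold f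
      nlinarith [mul_pos hspos hη, sq_nonneg s, sq_nonneg η, mul_pos hspos hspos]
  exact key (4*L) ⟨by linarith, le_refl _⟩

lemma compare_eta {η : ℝ} (h1 : 0 < η) (h2 : η < 1/4) : 4 + 12*η ≤ (1/(1/2-η))^2 := by
  rw [div_pow, one_pow, le_div_iff₀ (by nlinarith : (0:ℝ) < (1/2-η)^2)]
  nlinarith [sq_nonneg η]

lemma L2 {y : ℝ → ℝ} {δ ε G η L : ℝ}
    (hy : ∀ τ, 0 ≤ τ → HasDerivAt y (f (y τ) + δ) τ)
    (hδ : -(ε*G) ≤ δ) (hε : 0 < ε) (hG : 0 < G) (hη : 0 < η) (hη4 : η < 1/4)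
    (hL : 0 ≤ L)
    (h4 : 512*G^2*ε^2 < 1) (h5 : 24*G*ε ≤ 1/8) (h6 : 192*G*ε*L ≤ 1)
    (h7 : ε^2 < η/4) (h8 : 768*G*ε ≤ 6*η) (hεL : Real.exp (-L) = ε)
    (hy0 : 1/2 + (8*G + Real.sqrt (1/(2*η))) * ε ≤ y 0) :
    1 - η ≤ y (4*L) := by
  set σ : ℝ := 8*G*ε with hσ
  have hσpos : 0 < σ := by positivity
  have hσsmall : σ ≤ 1/24 := by rw [hσ]; linarith
  set lam : ℝ := 1/4 - 3*σ with hlam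
  have hlam1 : 1/8 ≤ lam := by rw [hlam, hσ]; linarith
  have hlampos : 0 < lam := lt_of_lt_of_le (by norm_num) hlam1
  have hlam2 : lam ≤ 1/4 := by rw [hlam]; linarith
  set B : ℝ := lam⁻¹ with hB
  have hB4 : 4 ≤ B := by rw [hB]; rw [le_inv_comm₀] <;> nlinarith
  have hB8 : B ≤ 8 := by rw [hB]; rw [inv_le_comm₀] <;> nlinarith
  have hBpos : 0 < B := by linarith
  set c7 : ℝ := Real.sqrt (1/(2*η)) with hc7
  have hc7sq : c7^2 = 1/(2*η) := Real.sq_sqrt (by positivity)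
  have hc7pos : 0 < c7 := Real.sqrt_pos.2 (by positivity)
  set A : ℝ := 1/(c7*ε)^2 - B with hA
  have hApos : 0 < A := by
    rw [hA]
    have h1 : (c7*ε)^2 = ε^2/(2*η) := by rw [mul_pow, hc7sq]; ring
    have h2 : (c7*ε)^2 < 1/8 := by
      rw [h1, div_lt_iff₀ (by positivity)]; linarith
    have : 8 < 1/(c7*ε)^2 := by
      rw [lt_div_iff₀ (by positivity)]; nlinarith [h2, sq_nonneg (c7*ε)]
    linarith
  set W : ℝ → ℝ := fun t => A * Real.exp (-(2*lam)*t) + B with hW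
  have hWpos : ∀ t, 0 < W t := fun t => by
    have := Real.exp_pos (-(2*lam)*t); positivity
  have hWB : ∀ t, B < W t := fun t => by
    have h := Real.exp_pos (-(2*lam)*t)
    simp only [hW]; nlinarith
  set p : ℝ → ℝ := fun t => (Real.sqrt (W t))⁻¹ with hp
  have hppos : ∀ t, 0 < p t := fun t => by
    simp only [hp]; exact inv_pos.2 (Real.sqrt_pos.2 (hWpos t))
  have hphalf : ∀ t, p t < 1/2 := by
    intro t
    have h2 : (2:ℝ) < Real.sqrt (W t) := by
      have : Real.sqrt 4 ≤ Real.sqrt B := Real.sqrt_le_sqrt hB4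
      have h4' : Real.sqrt 4 = 2 := by
        rw [show (4:ℝ) = 2^2 by norm_num, Real.sqrt_sq (by norm_num)]
      have hlt : Real.sqrt B < Real.sqrt (W t) := by
        exact Real.sqrt_lt_sqrt hBpos.le (hWB t)
      linarith
    simp only [hp]
    rw [inv_lt_comm₀ (by linarith) (by norm_num)]
    linarith
  -- derivative of p
  have hpderiv : ∀ t : ℝ, HasDerivAt p (lam * p t - (p t)^3) t := by
    intro t
    have hWt := hWpos t
    have hst : 0 < Real.sqrt (W t) := Real.sqrt_pos.2 hWt
    have h1 : HasDerivAt W (-(2*lam) * (A * Real.exp (-(2*lam)*t))) t := by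
      have := ((expDeriv (-(2*lam)) t).const_mul A).add_const B
      refine this.congr_deriv ?_
      ring
    have h2 : HasDerivAt (fun s => Real.sqrt (W s))
        (1 / (2 * Real.sqrt (W t)) * (-(2*lam) * (A * Real.exp (-(2*lam)*t)))) t :=
      (Real.hasDerivAt_sqrt hWt.ne').comp t h1
    have h3 := h2.inv hst.ne'
    refine h3.congr_deriv ?_
    have hsq : Real.sqrt (W t) ^ 2 = W t := Real.sq_sqrt hWt.le
    have hlB : lam * B = 1 := by rw [hB]; field_simp
    have hWval : W t = A * Real.exp (-(2*lam)*t) + B := rfl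
    simp only [hp]
    set s := Real.sqrt (W t) with hs
    set E := Real.exp (-(2*lam)*t) with hE
    have e1 : lam*s^2 - 1 = lam*(A*E) := by
      rw [hsq, hWval]; linear_combination hlB
    field_simp
    linear_combination (-1) * e1
  -- margin at the shifted equilibrium
  have hmargin : 0 < (1/4)*σ - σ^3 - ε*G := by
    rw [hσ]
    nlinarith [mul_pos (mul_pos hG hε) (sub_pos.2 h4)]
  set v : ℝ → ℝ := fun t => 1/2 + σ + p t with hv
  have hvf : ∀ t, f (v t) = (1/4)*(σ + p t) - (σ + p t)^3 := by
    intro t; simp only [hv, f]; ring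
  have hsub : ∀ t : ℝ, lam * p t - (p t)^3 < f (v t) + δ := by
    intro t
    have hpt := hppos t
    have hph := hphalf t
    have hσp : σ + p t ≤ 1 := by linarith
    rw [hvf t]
    nlinarith [mul_nonneg (mul_pos hσpos hpt).le (sub_nonneg.2 hσp), hmargin, hδ, hlam]
  have hvderiv : ∀ t : ℝ, HasDerivAt v (lam * p t - (p t)^3) t := by
    intro t
    exact (hpderiv t).const_add (1/2 + σ)
  have hp0 : p 0 = c7 * ε := by
    have hW0 : W 0 = (1/(c7*ε))^2 := by
      simp only [hW, hA, mul_zero, Real.exp_zero, mul_one]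
      field_simp
      ring
    simp only [hp, hW0, Real.sqrt_sq (by positivity : (0:ℝ) ≤ 1/(c7*ε))]
    rw [one_div, inv_inv]
  have hcont : ContinuousOn (fun t => -(y t)) (Set.Icc 0 (4*L)) :=
    fun t ht => ((hy t ht.1).continuousAt.neg).continuousWithinAt
  have hder : ∀ x ∈ Set.Ico (0:ℝ) (4*L),
      HasDerivWithinAt (fun t => -(y t)) ((fun t => -(f (y t) + δ)) x) (Set.Ici x) x :=
    fun x hx => ((hy x hx.1).neg).hasDerivWithinAt
  have hinit : -(y 0) ≤ -(v 0) := by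
    apply neg_le_neg
    simp only [hv, hp0]
    rw [hσ]
    linarith [hy0]
  have hBder : ∀ x : ℝ, HasDerivAt (fun t => -(v t)) ((fun t => -(lam * p t - (p t)^3)) x) x :=
    fun x => (hvderiv x).neg
  have hbound : ∀ x ∈ Set.Ico (0:ℝ) (4*L), (fun t => -(y t)) x = (fun t => -(v t)) x →
      (fun t => -(f (y t) + δ)) x < (fun t => -(lam * p t - (p t)^3)) x := by
    intro x _ hcontact
    simp only at hcontact ⊢
    have hyx : y x = v x := neg_inj.mp hcontact
    rw [hyx]
    have := hsub x
    linarith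
  have hcomp := image_le_of_deriv_right_lt_deriv_boundary hcont hder hinit hBder hbound
  -- final estimate
  have hε2 : Real.exp (-(2*L)) = ε^2 := by
    rw [show -(2*L) = (-L) + (-L) by ring, Real.exp_add, hεL]; ring
  have hexp24 : Real.exp (24*σ*L) ≤ 3 := by
    have h1 : 24*σ*L ≤ 1 := by rw [hσ]; nlinarith [h6]
    calc Real.exp (24*σ*L) ≤ Real.exp 1 := Real.exp_le_exp.2 h1
    _ ≤ 3 := by linarith [Real.exp_one_lt_d9]
  have hWT : W (4*L) ≤ (1/(1/2 - η))^2 := by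
    have hAB : A ≤ 1/(c7*ε)^2 := by rw [hA]; linarith
    have hexp1 : Real.exp (-(2*lam)*(4*L)) = ε^2 * Real.exp (24*σ*L) := by
      have he : -(2*lam)*(4*L) = -(2*L) + 24*σ*L := by rw [hlam]; ring
      rw [he, Real.exp_add, hε2]
    have e1 : A * Real.exp (-(2*lam)*(4*L)) ≤ (1/(c7*ε)^2) * (ε^2 * 3) := by
      rw [hexp1]
      apply mul_le_mul hAB ?_ (by positivity) (by positivity)
      exact mul_le_mul_of_nonneg_left hexp24 (sq_nonneg ε)
    have e2 : (1/(c7*ε)^2) * (ε^2 * 3) = 6*η := by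
      rw [mul_pow, hc7sq]
      field_simp
      ring
    have hterm : A * Real.exp (-(2*lam)*(4*L)) ≤ 6*η := by rw [e2] at e1; exact e1
    have hBle : B ≤ 4 + 6*η := by
      have hx : B * lam = 1 := by rw [hB]; field_simp
      have hkey : 1 ≤ (4 + 768*G*ε) * lam := by
        rw [hlam, hσ]; nlinarith [h5, mul_pos hG hε]
      have hB768 : B ≤ 4 + 768*G*ε := by
        have h2 : B * lam ≤ (4 + 768*G*ε) * lam := by rw [hx]; exact hkey
        exact (mul_le_mul_iff_of_pos_right hlampos).mp h2
      linarith [h8]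
    have hsum : W (4*L) ≤ 4 + 12*η := by
      have : W (4*L) = A * Real.exp (-(2*lam)*(4*L)) + B := rfl
      rw [this]; linarith
    linarith [compare_eta hη hη4]
  have hpT : 1/2 - η ≤ p (4*L) := by
    have h12 : 0 < 1/2 - η := by linarith
    have hsle : Real.sqrt (W (4*L)) ≤ 1/(1/2-η) := by
      calc Real.sqrt (W (4*L)) ≤ Real.sqrt ((1/(1/2-η))^2) := Real.sqrt_le_sqrt hWT
      _ = 1/(1/2-η) := Real.sqrt_sq (by positivity)
    have hsp : 0 < Real.sqrt (W (4*L)) := Real.sqrt_pos.2 (hWpos _)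
    have : p (4*L) = (Real.sqrt (W (4*L)))⁻¹ := rfl
    rw [this, le_inv_comm₀ h12 hsp]
    simpa [one_div] using hsle
  have hmem : (4*L) ∈ Set.Icc (0:ℝ) (4*L) := ⟨by linarith, le_refl _⟩
  have h9 := hcomp hmem
  have hvT : v (4*L) = 1/2 + σ + p (4*L) := rfl
  have : v (4*L) ≤ y (4*L) := by linarith
  rw [hvT] at this
  linarith


lemma partI {y : ℝ → ℝ} {δ η C0 ε L : ℝ}
    (hy : ∀ τ, 0 ≤ τ → HasDerivAt y (f (y τ) + δ) τ)
    (hη0 : 0 < η) (hη4 : η < 1/4) (hC0 : 1 < C0)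
    (hy0 : y 0 ≤ 3*C0) (hδ : δ < η/4) (hL : 0 ≤ L) (hεpos : 0 < ε)
    (hb1 : ε < 1) (hb3 : ε < η/(6*C0)) (hεL : Real.exp (-L) = ε) :
    y (4*L) ≤ 1 + η := by
  have hexpL : Real.exp (-(1/2)*(4*L)) = ε^2 := by
    rw [show -(1/2)*(4*L) = (-L)+(-L) by ring, Real.exp_add, hεL]; ring
  have hsq_small : 3*C0 * ε^2 < η/2 := by
    have h1 : ε * (6*C0) < η := by
      rw [lt_div_iff₀ (by positivity)] at hb3; linarith
    nlinarith [hεpos, hb1]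
  have hM3 : (1:ℝ) + η/2 < 3*C0 := by nlinarith
  have h := L1 hy hη0 hM3 hy0 hδ hL
  rw [hexpL] at h
  nlinarith [sq_nonneg ε, hεpos]

lemma nums {G ε η L : ℝ} (hGpos : 0 < G) (hεpos : 0 < ε) (hη0 : 0 < η)
    (hb1 : ε < 1) (hb4 : ε < 1/(23*(G+1))) (hb5 : ε < 1/(192*(G+1)))
    (hb6 : ε < (1/(384*(G+1)))^2) (hb7 : ε < η/8) (hb8 : ε < η/(128*(G+1)))
    (hL : L = -Real.log ε) :
    512*G^2*ε^2 < 1 ∧ 24*G*ε ≤ 1/8 ∧ 192*G*ε*L ≤ 1 ∧ ε^2 < η/4 ∧ 768*G*ε ≤ 6*η := by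
  refine ⟨?_, ?_, ?_, ?_, ?_⟩
  · have h1 : ε * (23*(G+1)) < 1 := by
      rw [lt_div_iff₀ (by positivity)] at hb4; linarith
    have h2 : ε*G < 1/23 := by nlinarith
    have h3 : 0 ≤ ε*G := by positivity
    nlinarith [h2, h3]
  · have h1 : ε * (192*(G+1)) < 1 := by
      rw [lt_div_iff₀ (by positivity)] at hb5; linarith
    nlinarith [hεpos]
  · have hlogneg : Real.log ε < 0 := Real.log_neg hεpos hb1
    have hsε : 0 < Real.sqrt ε := Real.sqrt_pos.2 hεpos
    have h01 : Real.log ((Real.sqrt ε)⁻¹) ≤ (Real.sqrt ε)⁻¹ - 1 :=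
      Real.log_le_sub_one_of_pos (by positivity)
    rw [Real.log_inv, Real.log_sqrt hεpos.le] at h01
    have hL2 : L ≤ 2*(Real.sqrt ε)⁻¹ := by rw [hL]; linarith
    have hLpos : 0 ≤ L := by rw [hL]; linarith
    have hmul : ε * (2*(Real.sqrt ε)⁻¹) = 2*Real.sqrt ε := by
      field_simp
      linear_combination (-1) * Real.sq_sqrt hεpos.le
    have hεL2 : ε * L ≤ 2*Real.sqrt ε := by
      calc ε * L ≤ ε * (2*(Real.sqrt ε)⁻¹) :=
            mul_le_mul_of_nonneg_left hL2 hεpos.le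
      _ = 2*Real.sqrt ε := hmul
    have hsb : Real.sqrt ε < 1/(384*(G+1)) := by
      have := Real.sqrt_lt_sqrt hεpos.le hb6
      rwa [Real.sqrt_sq (by positivity)] at this
    have h1 : Real.sqrt ε * (384*(G+1)) < 1 := by
      rw [lt_div_iff₀ (by positivity)] at hsb; linarith
    calc 192*G*ε*L = 192*G*(ε*L) := by ring
    _ ≤ 192*G*(2*Real.sqrt ε) := mul_le_mul_of_nonneg_left hεL2 (by positivity)
    _ ≤ 1 := by nlinarith [hsε]
  · nlinarith [hεpos, hb1, hb7]
  · have h1 : ε * (128*(G+1)) < η := by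
      rw [lt_div_iff₀ (by positivity)] at hb8; linarith
    nlinarith [hεpos]

theorem Y_after_log_time (η C0 α : ℝ) (hη : η ∈ Set.Ioo (0:ℝ) (1/4)) (hC0 : 1 < C0)
    (hα : 0 < α) (g : ℝ → ℝ) (hg : ∀ u, g u = α * u * (1 - u))
    (G : ℝ) (hG : IsGreatest ((fun u => |g u|) '' Set.Icc (-(2*C0)) (2*C0)) G) :
    ∃ ε0 > (0:ℝ), ∃ C7 > (0:ℝ), ∀ ε : ℝ, ε ∈ Set.Ioo 0 ε0 →
      ∀ δ : ℝ, (δ = ε * G ∨ δ = -(ε * G)) →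
      ∀ Y : ℝ → ℝ → ℝ,
        ContDiff ℝ (⊤ : ℕ∞) (fun p : ℝ × ℝ => Y p.1 p.2) →
        (∀ ξ : ℝ, ∀ τ : ℝ, 0 < τ → HasDerivAt (fun t => Y t ξ) (f (Y τ ξ) + δ) τ) →
        (∀ ξ : ℝ, Y 0 ξ = ξ) →
        ∀ ξ : ℝ, ξ ∈ Set.Ioo (-(2*C0)) (2*C0) →
          (-η ≤ Y ((1/4 : ℝ)⁻¹ * |Real.log ε|) ξ ∧
            Y ((1/4 : ℝ)⁻¹ * |Real.log ε|) ξ ≤ 1 + η) ∧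
          (1/2 + C7 * ε ≤ ξ → 1 - η ≤ Y ((1/4 : ℝ)⁻¹ * |Real.log ε|) ξ) ∧
          (ξ ≤ 1/2 - C7 * ε → Y ((1/4 : ℝ)⁻¹ * |Real.log ε|) ξ ≤ η) := by
  obtain ⟨hη0, hη4⟩ := hη
  have hhalf : (1/2:ℝ) ∈ Set.Icc (-(2*C0)) (2*C0) := by
    constructor <;> nlinarith
  have hGge : |g (1/2)| ≤ G := hG.2 ⟨1/2, hhalf, rfl⟩
  have hGpos : 0 < G := by
    have h1 : g (1/2) = α/4 := by rw [hg]; ring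
    rw [h1, abs_of_pos (by positivity)] at hGge
    linarith
  clear hG hg hhalf hGge
  refine ⟨min (min (min 1 (η/(8*(G+1)))) (min (η/(6*C0)) (1/(23*(G+1)))))
      (min (min (1/(192*(G+1))) ((1/(384*(G+1)))^2)) (min (η/8) (η/(128*(G+1))))), ?_,
    8*G + Real.sqrt (1/(2*η)), ?_, ?_⟩
  · have hC0' : (0:ℝ) < C0 := by linarith
    refine lt_min (lt_min (lt_min ?_ ?_) (lt_min ?_ ?_))
      (lt_min (lt_min ?_ ?_) (lt_min ?_ ?_)) <;> positivity
  · have := Real.sqrt_pos.2 (show (0:ℝ) < 1/(2*η) by positivity)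
    positivity
  rintro ε ⟨hεpos, hεlt⟩ δ hδcases Y hsm hode hY0 ξ hξ
  rw [lt_min_iff, lt_min_iff, lt_min_iff, lt_min_iff, lt_min_iff, lt_min_iff,
    lt_min_iff] at hεlt
  obtain ⟨⟨⟨hb1, hb2⟩, hb3, hb4⟩, ⟨hb5, hb6⟩, hb7, hb8⟩ := hεlt
  have hδub : δ ≤ ε*G := by
    rcases hδcases with h | h
    · exact le_of_eq h
    · rw [h]; nlinarith [mul_pos hεpos hGpos]
  have hδlb : -(ε*G) ≤ δ := by
    rcases hδcases with h | h
    · rw [h]; nlinarith [mul_pos hεpos hGpos]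
    · exact le_of_eq h.symm
  clear hδcases
  have hεG : ε*G < η/8 := by
    have h1 : ε * (8*(G+1)) < η := by
      rw [lt_div_iff₀ (by positivity)] at hb2; linarith
    nlinarith
  have hlogneg : Real.log ε < 0 := Real.log_neg hεpos hb1
  have hLpos : 0 < -Real.log ε := by linarith
  have hT : (1/4 : ℝ)⁻¹ * |Real.log ε| = 4*(-Real.log ε) := by
    rw [abs_of_neg hlogneg]; norm_num
  have hεL : Real.exp (-(-Real.log ε)) = ε := by rw [neg_neg, Real.exp_log hεpos]
  rw [hT]
  have hy : ∀ τ, 0 ≤ τ → HasDerivAt (fun t => Y t ξ) (f (Y τ ξ) + δ) τ :=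
    ode_ext (hsm.comp (contDiff_id.prodMk contDiff_const)) (hode ξ)
  have hy2 : ∀ τ, 0 ≤ τ → HasDerivAt (fun t => 1 - Y t ξ) (f (1 - Y τ ξ) + (-δ)) τ := by
    intro τ hτ
    have h := (hy τ hτ).const_sub 1
    refine h.congr_deriv ?_
    symm
    show f (1 - Y τ ξ) + -δ = -(f (Y τ ξ) + δ)
    unfold f; ring
  obtain ⟨h4', h5', h6', h7', h8'⟩ := nums hGpos hεpos hη0 hb1 hb4 hb5 hb6 hb7 hb8 rfl
  have hupper : Y (4*(-Real.log ε)) ξ ≤ 1 + η :=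
    partI hy hη0 hη4 hC0 (by show Y 0 ξ ≤ 3*C0; rw [hY0 ξ]; nlinarith [hξ.2])
      (by linarith) hLpos.le hεpos hb1 hb3 hεL
  have hlow2 : 1 - Y (4*(-Real.log ε)) ξ ≤ 1 + η :=
    partI hy2 hη0 hη4 hC0 (by show 1 - Y 0 ξ ≤ 3*C0; rw [hY0 ξ]; nlinarith [hξ.1])
      (by linarith) hLpos.le hεpos hb1 hb3 hεL
  refine ⟨⟨by linarith, hupper⟩, ?_, ?_⟩
  · intro hξ2
    exact L2 hy hδlb hεpos hGpos hη0 hη4 hLpos.le h4' h5' h6' h7' h8' hεL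
      (by show _ ≤ Y 0 ξ; rw [hY0 ξ]; linarith)
  · intro hξ3
    have h : 1 - η ≤ 1 - Y (4*(-Real.log ε)) ξ :=
      L2 hy2 (by linarith) hεpos hGpos hη0 hη4 hLpos.le h4' h5' h6' h7' h8' hεL
        (by show _ ≤ 1 - Y 0 ξ; rw [hY0 ξ]; linarith)
    linarith
end

section
/- Let g(u) = α u(1-u) with α > 0, let C_0 > 1, set G := sup_{u ∈ [-2C_0, 2C_0]} |g(u)| and μ := 1/4. There exist positive constants C_8 and ε_0 such that for all ε ∈ (0, ε_0), both for δ = εG and for δ = -εG, the solution Y of Y_τ = f(Y) + δ with Y(0,ξ) = ξ satisfies: if ξ ≥ 1/2 + C_8 ε then Y(τ,ξ) > 1/2 for all τ ∈ [0, μ^{-1}|ln ε|], and if ξ ≤ 1/2 - C_8 ε then Y(τ,ξ) < 1/2 for all τ ∈ [0, μ^{-1}|ln ε|]. -/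
lemma barrier_ge (F : ℝ → ℝ) (hFc : Continuous F) (h : ℝ → ℝ) (hc : Continuous h)
    (hd : ∀ t, 0 < t → HasDerivAt h (F (h t)) t) (L : ℝ) (hF : 0 < F L)
    (h0 : L ≤ h 0) : ∀ t, 0 ≤ t → L ≤ h t := by
  intro t₁ ht₁
  by_contra hlt
  push_neg at hlt
  have ht₁pos : 0 < t₁ := by
    rcases ht₁.lt_or_eq with h' | h'
    · exact h'
    · exfalso; rw [← h'] at hlt; linarith
  set S : Set ℝ := Set.Icc 0 t₁ ∩ h ⁻¹' (Set.Ici L) with hSdef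
  have hSne : S.Nonempty := ⟨0, ⟨le_refl 0, ht₁pos.le⟩, h0⟩
  have hclosed : IsClosed S := isClosed_Icc.inter (isClosed_Ici.preimage hc)
  have hScpt : IsCompact S :=
    IsCompact.of_isClosed_subset isCompact_Icc hclosed Set.inter_subset_left
  set s := sSup S with hs
  have hsmem : s ∈ S := hScpt.sSup_mem hSne
  have hs0 : 0 ≤ s := hsmem.1.1
  have hsL : L ≤ h s := hsmem.2
  have hslt : s < t₁ := by
    rcases hsmem.1.2.lt_or_eq with h' | h'
    · exact h'
    · exfalso; rw [h'] at hsL; linarith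
  -- for t ∈ (s, t₁], h t < L
  have hafter : ∀ t, s < t → t ≤ t₁ → h t < L := by
    intro t hst htt₁
    by_contra hge
    push_neg at hge
    have : t ∈ S := ⟨⟨le_trans hs0 hst.le, htt₁⟩, hge⟩
    exact absurd (le_csSup ⟨t₁, fun x hx => hx.1.2⟩ this) (not_le.mpr hst)
  -- h s = L
  have hhsL : h s = L := by
    refine le_antisymm ?_ hsL
    have htend : Filter.Tendsto h (nhdsWithin s (Set.Ioi s)) (nhds (h s)) :=
      hc.continuousAt.tendsto.mono_left nhdsWithin_le_nhds
    refine le_of_tendsto htend ?_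
    filter_upwards [Ioo_mem_nhdsGT_of_mem (Set.left_mem_Ico.mpr hslt)] with t ht
    exact (hafter t ht.1 ht.2.le).le
  -- F (h ·) is positive near s
  have hUopen : IsOpen {t : ℝ | 0 < F (h t)} := isOpen_lt continuous_const (hFc.comp hc)
  have hsU : s ∈ {t : ℝ | 0 < F (h t)} := by simpa [hhsL] using hF
  obtain ⟨η, hηpos, hball⟩ := Metric.isOpen_iff.mp hUopen s hsU
  obtain ⟨t₂, ht₂def⟩ : ∃ t₂ : ℝ, t₂ = s + min (η / 2) (t₁ - s) := ⟨_, rfl⟩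
  have hm1 : 0 < min (η / 2) (t₁ - s) := lt_min (by linarith) (by linarith)
  have hm2 : min (η / 2) (t₁ - s) ≤ η / 2 := min_le_left _ _
  have hm3 : min (η / 2) (t₁ - s) ≤ t₁ - s := min_le_right _ _
  have ht₂gt : s < t₂ := by linarith
  have ht₂le : t₂ ≤ t₁ := by linarith
  have hsub : Set.Icc s t₂ ⊆ {t : ℝ | 0 < F (h t)} := by
    intro x hx
    apply hball
    rw [Metric.mem_ball, Real.dist_eq, abs_lt]
    constructor
    · linarith [hx.1]
    · have h1 : x ≤ t₂ := hx.2
      linarith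
  have hmono : StrictMonoOn h (Set.Icc s t₂) := by
    apply strictMonoOn_of_deriv_pos (convex_Icc s t₂) hc.continuousOn
    intro x hx
    rw [interior_Icc] at hx
    have hx0 : 0 < x := lt_of_le_of_lt hs0 hx.1
    rw [(hd x hx0).deriv]
    exact hsub ⟨hx.1.le, hx.2.le⟩
  have hlt2 : h s < h t₂ :=
    hmono (Set.left_mem_Icc.mpr ht₂gt.le) (Set.right_mem_Icc.mpr ht₂gt.le) ht₂gt
  have := hafter t₂ ht₂gt ht₂le
  rw [hhsL] at hlt2
  linarith

theorem Y_initial_interval (C0 α : ℝ) (hC0 : 1 < C0) (hα : 0 < α)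
    (g : ℝ → ℝ) (hg : ∀ u, g u = α * u * (1 - u))
    (G : ℝ) (hG : IsGreatest ((fun u => |g u|) '' Set.Icc (-(2*C0)) (2*C0)) G) :
    ∃ C8 > (0:ℝ), ∃ ε0 > (0:ℝ), ∀ ε : ℝ, ε ∈ Set.Ioo 0 ε0 →
      ∀ δ : ℝ, (δ = ε * G ∨ δ = -(ε * G)) →
      ∀ Y : ℝ → ℝ → ℝ,
        ContDiff ℝ (⊤ : ℕ∞) (fun p : ℝ × ℝ => Y p.1 p.2) →
        (∀ ξ : ℝ, ∀ τ : ℝ, 0 < τ → HasDerivAt (fun t => Y t ξ) (f (Y τ ξ) + δ) τ) →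
        (∀ ξ : ℝ, Y 0 ξ = ξ) →
        ∀ ξ : ℝ,
          (1/2 + C8 * ε ≤ ξ →
            ∀ τ ∈ Set.Icc (0:ℝ) ((1/4 : ℝ)⁻¹ * |Real.log ε|), 1/2 < Y τ ξ) ∧
          (ξ ≤ 1/2 - C8 * ε →
            ∀ τ ∈ Set.Icc (0:ℝ) ((1/4 : ℝ)⁻¹ * |Real.log ε|), Y τ ξ < 1/2) := by
  obtain ⟨⟨u₀, hu₀, hGu₀⟩, hub⟩ := hG
  have hG0 : 0 ≤ G := hGu₀ ▸ abs_nonneg _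
  refine ⟨6 * G + 1, by linarith, 1 / (8 * (6 * G + 1)), by positivity, ?_⟩
  set C8 : ℝ := 6 * G + 1 with hC8def
  intro ε hε δ hδ Y hYc hYd hY0 ξ
  have hεpos : 0 < ε := hε.1
  have hC8pos : 0 < C8 := by rw [hC8def]; linarith
  have hCε : C8 * ε < 1 / 8 := by
    have h2 : ε < 1 / (8 * C8) := hε.2
    have h3 : C8 * ε < C8 * (1 / (8 * C8)) := by
      exact mul_lt_mul_of_pos_left h2 hC8pos
    rw [mul_one_div, mul_comm 8 C8] at h3
    calc C8 * ε < C8 / (C8 * 8) := h3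
    _ = 1 / 8 := by field_simp
  have hδabs : |δ| ≤ ε * G := by
    have hεG : 0 ≤ ε * G := mul_nonneg hεpos.le hG0
    rcases hδ with h | h
    · rw [h, abs_of_nonneg hεG]
    · rw [h, abs_neg, abs_of_nonneg hεG]
  have hδlb : -(ε * G) ≤ δ := neg_le_of_abs_le hδabs
  have hδub : δ ≤ ε * G := le_of_abs_le hδabs
  -- key inequality: ε * G < C8 * ε * (1/4 - (C8 * ε)^2)
  have hkey : ε * G < C8 * ε * (1/4 - (C8 * ε)^2) := by
    have hCεpos : 0 < C8 * ε := mul_pos hC8pos hεpos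
    have hsq : (C8 * ε)^2 < (1/8) * (C8 * ε) := by nlinarith
    nlinarith [mul_pos hCεpos hεpos, mul_nonneg hG0 hεpos.le]
  have hfup : ε * G < f (1/2 + C8 * ε) := by
    have : f (1/2 + C8 * ε) = C8 * ε * (1/4 - (C8 * ε)^2) := by
      unfold f; ring
    rw [this]; exact hkey
  have hfdown : f (1/2 - C8 * ε) < -(ε * G) := by
    have : f (1/2 - C8 * ε) = -(C8 * ε * (1/4 - (C8 * ε)^2)) := by
      unfold f; ring
    rw [this]; linarith
  have hfc : Continuous f := by unfold f; continuity
  have hYcont : ∀ ζ : ℝ, Continuous (fun t => Y t ζ) := by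
    intro ζ
    exact hYc.continuous.comp (continuous_id.prodMk continuous_const)
  constructor
  · intro hξ τ hτ
    have hb := barrier_ge (fun u => f u + δ) (hfc.add continuous_const)
      (fun t => Y t ξ) (hYcont ξ) (fun t ht => hYd ξ t ht) (1/2 + C8 * ε)
      (by show 0 < f (1/2 + C8 * ε) + δ; linarith) (by simpa only [hY0] using hξ) τ hτ.1
    have : 0 < C8 * ε := mul_pos hC8pos hεpos
    linarith
  · intro hξ τ hτ
    have hb := barrier_ge (fun u => -(f (-u) + δ)) (by continuity)
      (fun t => -(Y t ξ)) ((hYcont ξ).neg)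
      (fun t ht => by simp only [neg_neg]; exact (hYd ξ t ht).neg) (-(1/2 - C8 * ε))
      (by simp only [neg_neg]; linarith) (by simp only [hY0]; linarith) τ hτ.1
    have : 0 < C8 * ε := mul_pos hC8pos hεpos
    linarith
end

section
/- There exist positive constants β and σ_0 such that for every σ ∈ (0, σ_0] and every z ∈ ℝ, -U_0'(z) - σ f'(U_0(z)) ≥ 4σβ. -/
noncomputable def U0 (z : ℝ) : ℝ :=
  Real.exp (-z / Real.sqrt 2) / (1 + Real.exp (-z / Real.sqrt 2))

/-! With `g = U₀(1 - U₀) ≥ 0`, the profile solves the logistic equation `U₀' = -g/√2`, and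
`f'(u) = 3u(1 - u) - 1/2`. Hence `-U₀' - σ f'(U₀) = (1/√2 - 3σ) g + σ/2 ≥ σ/2` as soon as
`3σ ≤ 1/√2`, which gives the claim with `β = 1/8` and `σ₀ = 1/5`. -/

open Real

lemma hasDerivAt_f (u : ℝ) : HasDerivAt f (3 * (u * (1 - u)) - 1 / 2) u := by
  have h : HasDerivAt f _ u :=
    ((hasDerivAt_id' u).mul ((hasDerivAt_id' u).const_sub 1)).mul
      ((hasDerivAt_id' u).sub_const (1 / 2 : ℝ))
  exact h.congr_deriv (by simp only [Pi.mul_apply]; ring)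

lemma U0_eq (z : ℝ) : U0 z = exp (-z / √2) / (1 + exp (-z / √2)) := rfl

lemma U0_pos (z : ℝ) : 0 < U0 z := by
  rw [U0_eq]; positivity

lemma U0_lt_one (z : ℝ) : U0 z < 1 := by
  rw [U0_eq, div_lt_one (by positivity)]
  linarith

lemma hasDerivAt_U0 (z : ℝ) : HasDerivAt U0 (-(U0 z * (1 - U0 z)) / √2) z := by
  have hE : HasDerivAt (fun z : ℝ => exp (-z / √2)) (exp (-z / √2) * (-1 / √2)) z :=
    ((hasDerivAt_id' z).neg.div_const _).exp
  have h1E : 1 + exp (-z / √2) ≠ 0 := by positivity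
  have h : HasDerivAt U0 _ z := hE.div (hE.const_add 1) h1E
  refine h.congr_deriv ?_
  rw [U0_eq]
  field_simp
  ring

lemma three_fifths_le_inv_sqrt_two : 3 / 5 ≤ 1 / √2 := by
  have h : √2 < 3 / 2 := by
    nlinarith [sq_sqrt (show (0 : ℝ) ≤ 2 by norm_num), sqrt_nonneg 2]
  rw [le_div_iff₀ (by positivity)]
  linarith

theorem U0_f_inequality :
    ∃ β > (0:ℝ), ∃ σ0 > (0:ℝ), ∀ σ : ℝ, σ ∈ Set.Ioc 0 σ0 → ∀ z : ℝ,
      -deriv U0 z - σ * deriv f (U0 z) ≥ 4 * σ * β := by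
  refine ⟨1 / 8, by norm_num, 1 / 5, by norm_num, ?_⟩
  rintro σ ⟨-, hσ⟩ z
  rw [(hasDerivAt_U0 z).deriv, (hasDerivAt_f _).deriv]
  set g := U0 z * (1 - U0 z)
  have hg : 0 ≤ g := mul_nonneg (U0_pos z).le (sub_nonneg.mpr (U0_lt_one z).le)
  have h3σ : 3 * σ * g ≤ g / √2 := by
    rw [div_eq_mul_one_div, mul_comm g]
    exact mul_le_mul_of_nonneg_right (by linarith [three_fifths_le_inv_sqrt_two]) hg
  rw [neg_div, neg_neg]
  linarith
end

section
/- Let η ∈ (0,1/4). There exist positive constants δ_0, B_1, B_2 (depending only on η) such that for every δ with |δ| ≤ δ_0, denoting by a(δ) the unique zero of f_δ := f + δ in (1/4, 3/4), one has B_1 (q - a(δ)) ≤ f(q) + δ ≤ B_2 (q - a(δ)) for all q ∈ (a(δ), 1-η). -/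
/-- The divided difference `(f q - f a) / (q - a)`, in a form that exhibits its maximum `1/4`. -/
noncomputable def fSlope (a q : ℝ) : ℝ := 1/4 - (q - a) ^ 2 / 4 - 3/4 * (q + a - 1) ^ 2

theorem f_sub_f_eq_mul_fSlope (a q : ℝ) : f q - f a = (q - a) * fSlope a q := by
  unfold f fSlope
  ring

theorem fSlope_le_quarter (a q : ℝ) : fSlope a q ≤ 1/4 := by
  unfold fSlope
  nlinarith [sq_nonneg (q - a), sq_nonneg (q + a - 1)]

theorem half_le_fSlope {η a q : ℝ} (hη : η ≤ 1/4) (ha : |a - 1/2| ≤ η/4) (haq : a ≤ q)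
    (hq : q ≤ 1 - η) : η/2 ≤ fSlope a q := by
  obtain ⟨ha₁, ha₂⟩ := abs_le.mp ha
  unfold fSlope
  -- concavity in `q`: the slope exceeds its chord over `[a, 1 - η]` by `(q - a)(1 - η - q)`
  nlinarith [mul_nonneg (sub_nonneg.mpr haq) (sub_nonneg.mpr hq), sq_nonneg (a - 1/2)]

theorem mul_abs_sub_half_le_abs_f {a : ℝ} (ha : a ∈ Set.Icc (1/4 : ℝ) (3/4)) :
    3/16 * |a - 1/2| ≤ |f a| := by
  obtain ⟨ha₁, ha₂⟩ := ha
  have hprod : 3/16 ≤ a * (1 - a) := by nlinarith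
  rw [f, abs_mul, abs_of_pos (by linarith : 0 < a * (1 - a))]
  exact mul_le_mul_of_nonneg_right hprod (abs_nonneg _)

theorem f_delta_linear_bounds (η : ℝ) (hη : η ∈ Set.Ioo (0:ℝ) (1/4)) :
    ∃ δ0 > (0:ℝ), ∃ B1 > (0:ℝ), ∃ B2 > (0:ℝ), ∀ δ : ℝ, |δ| ≤ δ0 →
      ∀ a : ℝ, a ∈ Set.Ioo (1/4 : ℝ) (3/4) → f a + δ = 0 →
      ∀ q : ℝ, q ∈ Set.Ioo a (1 - η) →
        B1 * (q - a) ≤ f q + δ ∧ f q + δ ≤ B2 * (q - a) := by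
  obtain ⟨hη₀, hη₁⟩ := hη
  refine ⟨3 * η / 64, by positivity, η / 2, by positivity, 1/4, by norm_num, ?_⟩
  intro δ hδ a ha hfa q ⟨haq, hq⟩
  have ha_half : |a - 1/2| ≤ η / 4 := by
    have := mul_abs_sub_half_le_abs_f (Set.Ioo_subset_Icc_self ha)
    rw [show f a = -δ by linarith, abs_neg] at this
    linarith
  have hfq : f q + δ = (q - a) * fSlope a q := by rw [← f_sub_f_eq_mul_fSlope]; linarith
  have hqa : 0 ≤ q - a := by linarith
  rw [hfq, mul_comm _ (q - a), mul_comm _ (q - a)]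
  exact ⟨mul_le_mul_of_nonneg_left (half_le_fSlope hη₁.le ha_half haq.le hq.le) hqa,
    mul_le_mul_of_nonneg_left (fSlope_le_quarter a q) hqa⟩
end
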